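/- arXiv:2404.17116 — 2 statements merged into one kernel-verified Lean document; each statement's English description precedes it below -/
import Mathlib

section
/- The graph consisting of a double ray …v₋₂v₋₁v₀v₁v₂… together with one additional vertex v∞ adjacent to every vertex vₙ (n ∈ ℤ) has exactly two ends but exactly one edge-end. -/
/-! Every ray of this graph eventually runs monotonically along the double ray, so it shares a tail
with one of the two halves `v₀v₁v₂…` and `v₀v₋₁v₋₂…`. Deleting the two vertices `v∞` and `v₀`
separates these halves, so there are exactly two ends. Deleting finitely many edges, however, leaves
`v∞` joined to all but finitely many `vₙ`; hence `v∞` edge-dominates every ray and any two rays are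
joined through `v∞`, giving a single edge-end. -/

open SimpleGraph

universe u

/-- A ray (one-way infinite path) in a graph. -/
structure GraphRay {V : Type u} (G : SimpleGraph V) : Type u where
  f : ℕ → V
  inj : Function.Injective f
  adj : ∀ n : ℕ, G.Adj (f n) (f (n + 1))

/-- The graph `G - S`: delete a set of vertices (they become isolated). -/
def SimpleGraph.vDel {V : Type u} (G : SimpleGraph V) (S : Set V) : SimpleGraph V where
  Adj u v := G.Adj u v ∧ u ∉ S ∧ v ∉ S
  symm := ⟨fun u v h => ⟨h.1.symm, h.2.2, h.2.1⟩⟩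
  loopless := ⟨fun v h => G.loopless.irrefl v h.1⟩

/-- The graph `G - F`: delete a set of edges. -/
def SimpleGraph.eDel {V : Type u} (G : SimpleGraph V) (F : Set (Sym2 V)) : SimpleGraph V where
  Adj u v := G.Adj u v ∧ s(u, v) ∉ F
  symm := ⟨fun u v h => ⟨h.1.symm, by rw [Sym2.eq_swap]; exact h.2⟩⟩
  loopless := ⟨fun v h => G.loopless.irrefl v h.1⟩

/-- Tails of the rays `r` and `s` lie in the same connected component of `G - S`. -/
def GraphRay.VConn {V : Type u} (G : SimpleGraph V) (S : Set V) (r s : GraphRay G) : Prop :=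
  ∃ N M : ℕ, (∀ n, N ≤ n → r.f n ∉ S) ∧ (∀ m, M ≤ m → s.f m ∉ S) ∧
    (G.vDel S).Reachable (r.f N) (s.f M)

/-- Tails of the rays `r` and `s` lie in the same connected component of `G - F`. -/
def GraphRay.EConn {V : Type u} (G : SimpleGraph V) (F : Set (Sym2 V)) (r s : GraphRay G) : Prop :=
  ∃ N M : ℕ, (∀ n, N ≤ n → s(r.f n, r.f (n + 1)) ∉ F) ∧
    (∀ m, M ≤ m → s(s.f m, s.f (m + 1)) ∉ F) ∧
    (G.eDel F).Reachable (r.f N) (s.f M)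

/-- The end relation: no finite vertex set separates the two rays. -/
def endEquiv {V : Type u} (G : SimpleGraph V) (r s : GraphRay G) : Prop :=
  ∀ S : Set V, S.Finite → GraphRay.VConn G S r s

/-- The edge-end relation: no finite edge set separates the two rays. -/
def edgeEndEquiv {V : Type u} (G : SimpleGraph V) (r s : GraphRay G) : Prop :=
  ∀ F : Set (Sym2 V), F.Finite → F ⊆ G.edgeSet → GraphRay.EConn G F r s

/-- `v` dominates the ray `r`: no finite vertex set avoiding `v` separates `v` from a tail of `r`. -/
def dominates {V : Type u} (G : SimpleGraph V) (v : V) (r : GraphRay G) : Prop :=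
  ∀ S : Set V, S.Finite → v ∉ S →
    ∃ N : ℕ, (∀ n, N ≤ n → r.f n ∉ S) ∧ (G.vDel S).Reachable v (r.f N)

/-- `v` edge-dominates the ray `r`: no finite edge set separates `v` from a tail of `r`. -/
def edgeDominates {V : Type u} (G : SimpleGraph V) (v : V) (r : GraphRay G) : Prop :=
  ∀ F : Set (Sym2 V), F.Finite → F ⊆ G.edgeSet →
    ∃ N : ℕ, (∀ n, N ≤ n → s(r.f n, r.f (n + 1)) ∉ F) ∧ (G.eDel F).Reachable v (r.f N)

/-- The end space of `G` as a quotient of the set of rays. -/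
def EndSpace {V : Type u} (G : SimpleGraph V) : Type u := Quot (endEquiv G)

/-- The edge-end space of `G` as a quotient of the set of rays. -/
def EdgeEndSpace {V : Type u} (G : SimpleGraph V) : Type u := Quot (edgeEndEquiv G)

/-- The end topology, generated by the sets `Ω(S, [r])` for finite `S ⊆ V(G)`. -/
instance {V : Type u} (G : SimpleGraph V) : TopologicalSpace (EndSpace G) :=
  TopologicalSpace.generateFrom
    {O | ∃ (S : Set V) (_ : S.Finite) (r : GraphRay G),
      O = {x | ∃ s : GraphRay G, x = Quot.mk (endEquiv G) s ∧ GraphRay.VConn G S r s}}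

/-- The edge-end topology, generated by the sets `Ω_E(F, [r]_E)` for finite `F ⊆ E(G)`. -/
instance {V : Type u} (G : SimpleGraph V) : TopologicalSpace (EdgeEndSpace G) :=
  TopologicalSpace.generateFrom
    {O | ∃ (F : Set (Sym2 V)) (_ : F.Finite) (_ : F ⊆ G.edgeSet) (r : GraphRay G),
      O = {x | ∃ s : GraphRay G, x = Quot.mk (edgeEndEquiv G) s ∧ GraphRay.EConn G F r s}}

/-- The graph consisting of a double ray `…v₋₁v₀v₁…` (vertices `some n`, `n : ℤ`)
together with one extra vertex `v∞ = none` adjacent to every vertex of the double ray. -/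
def dominatedDoubleRay : SimpleGraph (Option ℤ) :=
  SimpleGraph.fromRel (fun x y => (∃ n : ℤ, x = some n ∧ y = some (n + 1)) ∨ x = none)

open Filter

namespace GraphRay

variable {V : Type u} {G : SimpleGraph V}

lemma eventually_notMem (r : GraphRay G) {S : Set V} (hS : S.Finite) :
    ∀ᶠ n in atTop, r.f n ∉ S := by
  rw [← Nat.cofinite_eq_atTop]
  exact (hS.preimage r.inj.injOn).eventually_cofinite_notMem

lemma edge_injective (r : GraphRay G) :
    Function.Injective fun n => s(r.f n, r.f (n + 1)) := by
  intro m n h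
  rcases Sym2.eq_iff.mp h with ⟨h₁, -⟩ | ⟨h₁, h₂⟩
  · exact r.inj h₁
  · have := r.inj h₁
    have := r.inj h₂
    omega

lemma eventually_edge_notMem (r : GraphRay G) {F : Set (Sym2 V)} (hF : F.Finite) :
    ∀ᶠ n in atTop, s(r.f n, r.f (n + 1)) ∉ F := by
  rw [← Nat.cofinite_eq_atTop]
  exact (hF.preimage r.edge_injective.injOn).eventually_cofinite_notMem

end GraphRay

section Ends

variable {V : Type u} {G : SimpleGraph V}

lemma endEquiv_of_tail_eq {r s : GraphRay G} {N M : ℕ}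
    (h : ∀ n, r.f (N + n) = s.f (M + n)) : endEquiv G r s := by
  intro S hS
  obtain ⟨k, hk⟩ := eventually_atTop.mp ((r.eventually_notMem hS).and (s.eventually_notMem hS))
  refine ⟨N + k, M + k, fun n hn => (hk n (by omega)).1, fun m hm => (hk m (by omega)).2, ?_⟩
  rw [h k]

lemma edgeEndEquiv_of_edgeDominates {v : V} {r s : GraphRay G}
    (hr : edgeDominates G v r) (hs : edgeDominates G v s) : edgeEndEquiv G r s := by
  intro F hF hFG
  obtain ⟨N, hN, hvr⟩ := hr F hF hFG
  obtain ⟨M, hM, hvs⟩ := hs F hF hFG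
  exact ⟨N, M, hN, hM, hvr.symm.trans hvs⟩

lemma edgeDominates_of_finite_nonadj {v : V} (hv : {w | ¬ G.Adj v w}.Finite)
    (r : GraphRay G) : edgeDominates G v r := by
  intro F hF _
  have hcut : {w | s(v, w) ∈ F}.Finite :=
    hF.preimage (fun _ _ _ _ h => Sym2.congr_right.mp h)
  obtain ⟨N, hN⟩ := eventually_atTop.mp
    ((r.eventually_notMem (hv.union hcut)).and (r.eventually_edge_notMem hF))
  refine ⟨N, fun n hn => (hN n hn).2, ?_⟩
  have hfar := (hN N le_rfl).1
  simp only [Set.mem_union, Set.mem_ofPred_eq, not_or, not_not] at hfar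
  exact SimpleGraph.Adj.reachable (G := G.eDel F) ⟨hfar.1, hfar.2⟩

end Ends

lemma SimpleGraph.Reachable.mem_of_adj_closed {V : Type u} {H : SimpleGraph V} {P : Set V}
    (hP : ∀ u w, H.Adj u w → u ∈ P → w ∈ P) {u w : V} (h : H.Reachable u w) (hu : u ∈ P) :
    w ∈ P := by
  rw [SimpleGraph.reachable_iff_reflTransGen] at h
  induction h with
  | refl => exact hu
  | tail _ hadj ih => exact hP _ _ hadj ih

lemma Int.exists_unit_eq_add_mul_of_injective {g : ℕ → ℤ} (hinj : Function.Injective g)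
    (hstep : ∀ n, g (n + 1) = g n + 1 ∨ g n = g (n + 1) + 1) :
    ∃ σ : ℤˣ, ∀ n : ℕ, g n = g 0 + σ * n := by
  have hunit : ∀ n, ∃ τ : ℤˣ, g (n + 1) = g n + τ := fun n => by
    rcases hstep n with h | h
    · exact ⟨1, by simpa using h⟩
    · exact ⟨-1, by simp; omega⟩
  obtain ⟨σ, hσ⟩ := hunit 0
  have hσ' := Int.isUnit_iff.mp σ.isUnit
  have hsucc : ∀ n, g (n + 1) = g n + σ := by
    intro n
    induction n with
    | zero => exact hσ
    | succ n ih =>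
      obtain ⟨τ, hτ⟩ := hunit (n + 1)
      have hτ' := Int.isUnit_iff.mp τ.isUnit
      -- otherwise the sequence would return to `g n`
      have := hinj.ne (show n + 1 + 1 ≠ n by omega)
      omega
  refine ⟨σ, fun n => ?_⟩
  induction n with
  | zero => simp
  | succ n ih => rw [hsucc, ih]; push_cast; ring

namespace dominatedDoubleRay

@[simp]
lemma adj_some_some {a b : ℤ} :
    dominatedDoubleRay.Adj (some a) (some b) ↔ b = a + 1 ∨ a = b + 1 := by
  simp only [dominatedDoubleRay, fromRel_adj, ne_eq, Option.some.injEq, exists_eq_left',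
    reduceCtorEq, or_false, and_iff_right_iff_imp]
  omega

@[simp]
lemma adj_none_some (a : ℤ) : dominatedDoubleRay.Adj none (some a) := by
  simp [dominatedDoubleRay]

def axisRay (σ : ℤˣ) : GraphRay dominatedDoubleRay where
  f n := some (σ * n)
  inj a b h := by simpa using h
  adj n := by
    have := Int.isUnit_iff.mp σ.isUnit
    simp only [adj_some_some]
    rcases this with h | h <;> rw [h] <;> omega

lemma exists_tail_eq_axisRay (t : GraphRay dominatedDoubleRay) :
    ∃ (σ : ℤˣ) (N M : ℕ), ∀ n, t.f (N + n) = (axisRay σ).f (M + n) := by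
  obtain ⟨N₀, hN₀⟩ := eventually_atTop.mp (t.eventually_notMem (Set.finite_singleton none))
  choose g hg using fun n => Option.ne_none_iff_exists'.mp (hN₀ (N₀ + n) (by omega))
  have hinj : Function.Injective g := fun a b h => by
    have := t.inj ((hg a).trans (h ▸ (hg b).symm))
    omega
  have hstep : ∀ n, g (n + 1) = g n + 1 ∨ g n = g (n + 1) + 1 := fun n => by
    have h := t.adj (N₀ + n)
    rw [hg, show N₀ + n + 1 = N₀ + (n + 1) by omega, hg] at h
    simpa using h
  obtain ⟨σ, hσ⟩ := Int.exists_unit_eq_add_mul_of_injective hinj hstep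
  have hσ' := Int.isUnit_iff.mp σ.isUnit
  -- after `|g 0|` further steps the tail has the sign of `σ`, so it lies on `axisRay σ`
  refine ⟨σ, N₀ + (g 0).natAbs, (σ * g 0 + (g 0).natAbs).toNat, fun n => ?_⟩
  rw [add_assoc, hg, hσ]
  simp only [axisRay, Option.some.injEq]
  have := le_abs_self (g 0)
  have := neg_abs_le (g 0)
  rcases hσ' with h | h <;> rw [h] <;> push_cast <;> omega

lemma pos_of_reachable_vDel {a b : ℤ}
    (h : (dominatedDoubleRay.vDel {none, some 0}).Reachable (some a) (some b)) (ha : 0 < a) :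
    0 < b := by
  obtain ⟨k, hk, hbk⟩ := h.mem_of_adj_closed (P := {x | ∃ k : ℤ, 0 < k ∧ x = some k})
    (fun u w hadj ⟨k, hk, hu⟩ => by
      obtain ⟨hadj, -, hw⟩ := hadj
      subst hu
      cases w with
      | none => simp at hw
      | some j =>
        simp only [adj_some_some, Set.mem_insert_iff, Set.mem_singleton_iff, reduceCtorEq,
          Option.some.injEq, false_or] at hadj hw
        exact ⟨j, by omega, rfl⟩)
    ⟨a, ha, rfl⟩
  rw [Option.some.injEq] at hbk
  omega

lemma not_endEquiv_axisRay : ¬ endEquiv dominatedDoubleRay (axisRay 1) (axisRay (-1)) := by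
  intro h
  obtain ⟨N, M, hN, hM, hreach⟩ := h {none, some 0} (Set.toFinite _)
  have hN0 := hN N le_rfl
  have hM0 := hM M le_rfl
  simp only [axisRay, Units.val_one, Units.val_neg, one_mul, neg_mul, Set.mem_insert_iff,
    Set.mem_singleton_iff, reduceCtorEq, Option.some.injEq, Int.natCast_eq_zero, neg_eq_zero,
    false_or] at hN0 hM0 hreach
  have := pos_of_reachable_vDel hreach (by omega)
  omega

lemma edgeDominates_none (r : GraphRay dominatedDoubleRay) :
    edgeDominates dominatedDoubleRay none r := by
  refine edgeDominates_of_finite_nonadj ((Set.finite_singleton none).subset fun w hw => ?_) r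
  cases w with
  | none => rfl
  | some a => exact absurd (adj_none_some a) hw

end dominatedDoubleRay

open dominatedDoubleRay in
/-- this graph has exactly two ends but exactly one edge-end. -/
theorem dominatedDoubleRay_two_ends_one_edgeEnd :
    (∃ r s : GraphRay dominatedDoubleRay,
      ¬ endEquiv dominatedDoubleRay r s ∧
      ∀ t : GraphRay dominatedDoubleRay,
        endEquiv dominatedDoubleRay t r ∨ endEquiv dominatedDoubleRay t s) ∧
    (Nonempty (GraphRay dominatedDoubleRay) ∧
      ∀ r s : GraphRay dominatedDoubleRay, edgeEndEquiv dominatedDoubleRay r s) := by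
  refine ⟨⟨axisRay 1, axisRay (-1), not_endEquiv_axisRay, fun t => ?_⟩, ⟨axisRay 1⟩, fun r s => ?_⟩
  · obtain ⟨σ, N, M, h⟩ := exists_tail_eq_axisRay t
    rcases Int.units_eq_one_or σ with rfl | rfl
    · exact Or.inl (endEquiv_of_tail_eq h)
    · exact Or.inr (endEquiv_of_tail_eq h)
  · exact edgeEndEquiv_of_edgeDominates (edgeDominates_none r) (edgeDominates_none s)
end

section
/- (Star–Comb Lemma) Let G be a connected graph and U an infinite set of vertices of G. Then G contains either a comb with all teeth in U (a ray r together with infinitely many disjoint paths from r to distinct vertices of U, possibly trivial), or a subdivided infinite star with all leaves in U (a vertex c together with infinitely many paths from c to distinct vertices of U, pairwise disjoint except at c). -/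
open SimpleGraph

universe u

/-! Grow a tree in `G` from one vertex, each time attaching a path to a new vertex of `U`;
numbering the vertices in the order they are attached gives a tree on `ℕ` in which parents
precede their children and infinitely many nodes lie in `U`. Call a node rich if its subtree
contains infinitely many of them. If every rich node has a rich child, the rich nodes contain a
ray from the root; teeth are `U`-nodes in the subtrees of ever deeper ray nodes, chosen so far
apart that their tree paths up to the ray are disjoint. Otherwise some rich node has only
non-rich children, so infinitely many of its children have a `U`-node below them, and the tree
paths down to one such node for each of these children form a subdivided star. -/

theorem List.exists_forall_getElem_eq_of_isPrefix {α : Type*} {L : ℕ → List α}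
    (hL : ∀ n, L n <+: L (n + 1)) (hlen : ∀ n, n < (L n).length) :
    ∃ F : ℕ → α, ∀ n i (hi : i < (L n).length), (L n)[i] = F i := by
  have hmono : ∀ m n, m ≤ n → L m <+: L n := fun m n hmn => by
    induction n, hmn using Nat.le_induction with
    | base => exact List.prefix_refl _
    | succ n _ ih => exact ih.trans (hL n)
  refine ⟨fun i => (L i)[i]'(hlen i), fun n i hi => ?_⟩
  rcases le_total i n with hin | hni
  · exact ((hmono i n hin).getElem (hlen i)).symm
  · exact (hmono n i hni).getElem hi

namespace SimpleGraph

variable {V : Type u} {G : SimpleGraph V}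

def IsSearchOrder (G : SimpleGraph V) (l : List V) : Prop :=
  l.Nodup ∧
    ∀ i (hi : i < l.length), 0 < i → ∃ j, ∃ hj : j < i, G.Adj (l[j]'(hj.trans hi)) l[i]

lemma isSearchOrder_singleton (v : V) : G.IsSearchOrder [v] :=
  ⟨List.nodup_singleton v, fun i hi hi0 => by rw [List.length_singleton] at hi; omega⟩

lemma IsSearchOrder.append_singleton {l : List V} {x y : V} (hl : G.IsSearchOrder l)
    (hx : x ∈ l) (hxy : G.Adj x y) (hy : y ∉ l) : G.IsSearchOrder (l ++ [y]) := by
  refine ⟨hl.1.append (List.nodup_singleton y) (by simpa using hy), fun i hi hi0 => ?_⟩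
  obtain ⟨j, hj, rfl⟩ := List.getElem_of_mem hx
  rw [List.length_append, List.length_singleton] at hi
  rcases Nat.lt_succ_iff_lt_or_eq.1 hi with hil | rfl
  · obtain ⟨k, hki, hadj⟩ := hl.2 i hil hi0
    refine ⟨k, hki, ?_⟩
    rwa [List.getElem_append_left (hki.trans hil), List.getElem_append_left hil]
  · exact ⟨j, hj, by simpa [List.getElem_append_left hj] using hxy⟩

lemma IsSearchOrder.exists_prefix_mem {l : List V} {x y : V} (hl : G.IsSearchOrder l)
    (w : G.Walk x y) (hx : x ∈ l) : ∃ l', l <+: l' ∧ G.IsSearchOrder l' ∧ y ∈ l' := by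
  induction w generalizing l with
  | nil => exact ⟨l, List.prefix_refl l, hl, hx⟩
  | @cons x z y hxz w ih =>
    by_cases hz : z ∈ l
    · exact ih hl hz
    · obtain ⟨l', hpre, hl', hy⟩ := ih (hl.append_singleton hx hxz hz) List.mem_concat_self
      exact ⟨l', (List.prefix_append l [z]).trans hpre, hl', hy⟩

lemma Connected.exists_isSearchOrder_extension (hG : G.Connected) {U : Set V}
    (hU : U.Infinite) {l : List V} (hl : G.IsSearchOrder l) (hne : l ≠ []) :
    ∃ l', (G.IsSearchOrder l' ∧ l' ≠ []) ∧ l <+: l' ∧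
      ∃ u ∈ U, u ∈ l' ∧ u ∉ l := by
  obtain ⟨u, huU, hul⟩ := hU.exists_notMem_finite l.finite_toSet
  obtain ⟨l', hpre, hl', hu⟩ := hl.exists_prefix_mem (hG.preconnected _ u).some (l.head_mem hne)
  exact ⟨l', ⟨hl', List.ne_nil_of_mem hu⟩, hpre, u, huU, hu, hul⟩

theorem Connected.exists_searchSeq (hG : G.Connected) {U : Set V} (hU : U.Infinite) :
    ∃ F : ℕ → V, Function.Injective F ∧ (∀ n, 0 < n → ∃ m < n, G.Adj (F m) (F n)) ∧
      (F ⁻¹' U).Infinite := by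
  obtain ⟨v, -⟩ := hU.nonempty
  choose! next hnext hpre hnew using
    fun l (hl : G.IsSearchOrder l ∧ l ≠ []) => hG.exists_isSearchOrder_extension hU hl.1 hl.2
  set L : ℕ → List V := fun n => next^[n] [v] with hLdef
  have hsucc : ∀ n, L (n + 1) = next (L n) := fun n => Function.iterate_succ_apply' _ _ _
  have hL : ∀ n, G.IsSearchOrder (L n) ∧ L n ≠ [] := fun n => by
    induction n with
    | zero => exact ⟨isSearchOrder_singleton v, List.cons_ne_nil _ _⟩
    | succ n ih => rw [hsucc]; exact hnext _ ih
  have hLpre : ∀ n, L n <+: L (n + 1) := fun n => by rw [hsucc]; exact hpre _ (hL n)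
  have hlen : ∀ n, n < (L n).length := fun n => by
    induction n with
    | zero => simp [hLdef]
    | succ n ih =>
      obtain ⟨u, -, hu, hun⟩ := hnew _ (hL n)
      rw [← hsucc] at hu
      have hne : (L n).length ≠ (L (n + 1)).length :=
        fun h => hun ((hLpre n).eq_of_length h ▸ hu)
      have := (hLpre n).length_le
      omega
  obtain ⟨F, hF⟩ := List.exists_forall_getElem_eq_of_isPrefix hLpre hlen
  refine ⟨F, fun i j hij => ?_, fun n hn => ?_, Set.infinite_of_forall_exists_gt fun n => ?_⟩
  · have hi : i < (L (max i j + 1)).length := by have := hlen (max i j + 1); omega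
    have hj : j < (L (max i j + 1)).length := by have := hlen (max i j + 1); omega
    rwa [← hF _ i hi, ← hF _ j hj, (hL _).1.1.getElem_inj_iff] at hij
  · obtain ⟨m, hmn, hadj⟩ := (hL n).1.2 n (hlen n) hn
    exact ⟨m, hmn, by rwa [hF, hF] at hadj⟩
  · obtain ⟨u, huU, hu, hun⟩ := hnew _ (hL n)
    rw [← hsucc] at hu
    obtain ⟨i, hi, rfl⟩ := List.getElem_of_mem hu
    refine ⟨i, by rw [Set.mem_preimage, ← hF _ i hi]; exact huU,
      (hlen n).trans_le (not_lt.1 fun hin => ?_)⟩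
    exact hun ((hLpre n).getElem hin ▸ List.getElem_mem hin)

end SimpleGraph

section ParentMap

variable {P : ℕ → ℕ}

/-- The value `P 0` plays no role: `0` is the root and has no parent. -/
def IsDescendant (P : ℕ → ℕ) (n t : ℕ) : Prop :=
  Relation.ReflTransGen (fun d c => 0 < d ∧ P d = c) n t

def subtree (P : ℕ → ℕ) (t : ℕ) : Set ℕ := {n | IsDescendant P n t}

namespace IsDescendant

@[refl] lemma refl (n : ℕ) : IsDescendant P n n := Relation.ReflTransGen.refl

lemma trans {n m t : ℕ} (hnm : IsDescendant P n m) (hmt : IsDescendant P m t) :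
    IsDescendant P n t :=
  Relation.ReflTransGen.trans hnm hmt

lemma of_parent {n : ℕ} (hn : 0 < n) : IsDescendant P n (P n) :=
  Relation.ReflTransGen.single ⟨hn, rfl⟩

lemma iff_eq_or_parent {n t : ℕ} :
    IsDescendant P n t ↔ n = t ∨ 0 < n ∧ IsDescendant P (P n) t := by
  unfold IsDescendant
  rw [Relation.ReflTransGen.cases_head_iff]
  constructor
  · rintro (h | ⟨c, ⟨hn, rfl⟩, h⟩)
    exacts [Or.inl h, Or.inr ⟨hn, h⟩]
  · rintro (h | ⟨hn, h⟩)
    exacts [Or.inl h, Or.inr ⟨_, ⟨hn, rfl⟩, h⟩]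

lemma exists_child {n t : ℕ} (h : IsDescendant P n t) (hnt : n ≠ t) :
    ∃ c, 0 < c ∧ P c = t ∧ IsDescendant P n c := by
  obtain h | ⟨c, hnc, hc, rfl⟩ := Relation.ReflTransGen.cases_tail h
  exacts [absurd h.symm hnt, ⟨c, hc, rfl, hnc⟩]

lemma total {n a b : ℕ} (ha : IsDescendant P n a) (hb : IsDescendant P n b) :
    IsDescendant P a b ∨ IsDescendant P b a :=
  Relation.ReflTransGen.total_of_right_unique
    (fun _ _ _ h₁ h₂ => h₁.2.symm.trans h₂.2) ha hb

variable (hP : ∀ n, 0 < n → P n < n)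
include hP

lemma le {n t : ℕ} (h : IsDescendant P n t) : t ≤ n := by
  induction h with
  | refl => rfl
  | tail _ hcb ih => exact (hcb.2 ▸ (hP _ hcb.1).le).trans ih

lemma eq_of_parent_eq {n c c' : ℕ} (hc : 0 < c) (hc' : 0 < c') (hpar : P c = P c')
    (hnc : IsDescendant P n c) (hnc' : IsDescendant P n c') : c = c' := by
  have key : ∀ {c c'}, 0 < c' → P c = P c' → IsDescendant P c c' → c = c' := by
    intro c c' hc' hpar h
    refine (iff_eq_or_parent.1 h).resolve_right fun ⟨_, h'⟩ => ?_
    have := h'.le hP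
    have := hP c' hc'
    omega
  rcases hnc.total hnc' with h | h
  exacts [key hc' hpar h, (key hc hpar.symm h).symm]

end IsDescendant

lemma subtree_zero (hP : ∀ n, 0 < n → P n < n) : subtree P 0 = Set.univ := by
  refine Set.eq_univ_of_forall fun n => ?_
  induction n using Nat.strong_induction_on with
  | _ n ih =>
    rcases Nat.eq_zero_or_pos n with rfl | hn
    · exact .refl 0
    · exact (IsDescendant.of_parent hn).trans (ih _ (hP n hn))

lemma strictMono_of_parent_eq (hP : ∀ n, 0 < n → P n < n) {b : ℕ → ℕ}
    (hb : ∀ k, 0 < b (k + 1) ∧ P (b (k + 1)) = b k) : StrictMono b :=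
  strictMono_nat_of_lt_succ fun k => (hb k).2 ▸ hP _ (hb k).1

lemma exists_branch {A : Set ℕ}
    (hstep : ∀ t, (A ∩ subtree P t).Infinite →
      ∃ c, 0 < c ∧ P c = t ∧ (A ∩ subtree P c).Infinite)
    {t : ℕ} (ht : (A ∩ subtree P t).Infinite) :
    ∃ b : ℕ → ℕ, (∀ k, 0 < b (k + 1) ∧ P (b (k + 1)) = b k) ∧
      ∀ k, (A ∩ subtree P (b k)).Infinite := by
  choose! next hnext using hstep
  have hrich : ∀ k, (A ∩ subtree P (next^[k] t)).Infinite := fun k => by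
    induction k with
    | zero => exact ht
    | succ k ih => rw [Function.iterate_succ_apply']; exact (hnext _ ih).2.2
  refine ⟨fun k => next^[k] t, fun k => ?_, hrich⟩
  simp only [Function.iterate_succ_apply']
  exact ⟨(hnext _ (hrich k)).1, (hnext _ (hrich k)).2.1⟩

lemma exists_separated_teeth (hP : ∀ n, 0 < n → P n < n) {A : Set ℕ} {b : ℕ → ℕ}
    (hb : StrictMono b) (hbA : ∀ k, (A ∩ subtree P (b k)).Nonempty) :
    ∃ w a : ℕ → ℕ, (∀ n, w n ∈ A ∧ IsDescendant P (w n) (b (a n))) ∧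
      (∀ n k, IsDescendant P (w n) (b k) → k ≤ a n) ∧
      ∀ n n', n < n' → w n < b (a n') := by
  classical
  choose pick hpick using hbA
  set m : ℕ → ℕ := fun n => (fun k => pick k + 1)^[n] 0
  have hm : ∀ n, m (n + 1) = pick (m n) + 1 := fun n => Function.iterate_succ_apply' _ _ _
  have hbound : ∀ n k, IsDescendant P (pick (m n)) (b k) → k ≤ pick (m n) :=
    fun n k h => hb.le_apply.trans (h.le hP)
  -- the tooth `pick (m n)` is attached to the ray at its last ancestor on the ray
  set a : ℕ → ℕ := fun n =>
    Nat.findGreatest (fun k => IsDescendant P (pick (m n)) (b k)) (pick (m n))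
  have ha : ∀ n, m n ≤ a n := fun n => Nat.le_findGreatest (hbound n _ (hpick _).2) (hpick _).2
  have hmono : StrictMono m := strictMono_nat_of_lt_succ fun n => by
    have := hb.le_apply (x := m n)
    have := (hpick (m n)).2.le hP
    rw [hm]
    omega
  refine ⟨fun n => pick (m n), a,
    fun n => ⟨(hpick _).1, Nat.findGreatest_spec (P := fun k => IsDescendant P (pick (m n)) (b k))
      (hbound n _ (hpick _).2) (hpick _).2⟩,
    fun n k h => Nat.le_findGreatest (hbound n k h) h, fun n n' hnn' => ?_⟩
  calc pick (m n) < m (n + 1) := by rw [hm]; omega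
    _ ≤ m n' := hmono.monotone hnn'
    _ ≤ b (m n') := hb.le_apply
    _ ≤ b (a n') := hb.monotone (ha n')

lemma exists_children_with_descendants {A : Set ℕ} {t : ℕ} (ht : (A ∩ subtree P t).Infinite)
    (hfin : ∀ c, 0 < c → P c = t → (A ∩ subtree P c).Finite) :
    ∃ c v : ℕ → ℕ, Function.Injective c ∧
      ∀ k, 0 < c k ∧ P (c k) = t ∧ v k ∈ A ∧ IsDescendant P (v k) (c k) := by
  set C := {c | 0 < c ∧ P c = t ∧ (A ∩ subtree P c).Nonempty}
  have hC : C.Infinite := fun hC => ht <|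
    ((Set.finite_singleton t).union (hC.biUnion fun c hc => hfin c hc.1 hc.2.1)).subset
      fun n ⟨hnA, hnt⟩ => by
        by_cases hn : n = t
        · exact Or.inl hn
        · obtain ⟨c, hc, hct, hnc⟩ := IsDescendant.exists_child hnt hn
          exact Or.inr (Set.mem_biUnion ⟨hc, hct, n, hnA, hnc⟩ ⟨hnA, hnc⟩)
  set e := Set.Infinite.natEmbedding C hC
  choose v hv using fun k => (e k).2.2.2
  exact ⟨fun k => e k, v, fun k l h => e.injective (Subtype.ext h),
    fun k => ⟨(e k).2.1, (e k).2.2.1, (hv k).1, (hv k).2⟩⟩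

end ParentMap

namespace SimpleGraph

variable {V : Type u} {G : SimpleGraph V}

def HasComb (G : SimpleGraph V) (U : Set V) : Prop :=
  ∃ (r : GraphRay G) (a : ℕ → ℕ) (u : ℕ → V)
      (P : (n : ℕ) → G.Walk (r.f (a n)) (u n)),
    Function.Injective u ∧ (∀ n, u n ∈ U) ∧ (∀ n, (P n).IsPath) ∧
    (∀ n m, n ≠ m → ∀ x ∈ (P n).support, x ∉ (P m).support) ∧
    (∀ n k, r.f k ∈ (P n).support → r.f k = r.f (a n))

def HasSubdividedStar (G : SimpleGraph V) (U : Set V) : Prop :=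
  ∃ (c : V) (u : ℕ → V) (P : (n : ℕ) → G.Walk c (u n)),
    Function.Injective u ∧ (∀ n, u n ∈ U) ∧ (∀ n, (P n).IsPath) ∧ (∀ n, u n ≠ c) ∧
    (∀ n m, n ≠ m → ∀ x ∈ (P n).support, x ∈ (P m).support → x = c)

/-- A tree in `G` rooted at `vert 0`, numbered so that every parent precedes its children. -/
structure NatTree (G : SimpleGraph V) where
  vert : ℕ → V
  parent : ℕ → ℕ
  vert_injective : Function.Injective vert
  parent_lt : ∀ n, 0 < n → parent n < n
  adj_parent : ∀ n, 0 < n → G.Adj (vert n) (vert (parent n))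

theorem Connected.exists_natTree (hG : G.Connected) {U : Set V} (hU : U.Infinite) :
    ∃ T : G.NatTree, (T.vert ⁻¹' U).Infinite := by
  obtain ⟨F, hinj, hadj, hFU⟩ := hG.exists_searchSeq hU
  have hparent : ∀ n, ∃ m, 0 < n → m < n ∧ G.Adj (F n) (F m) := fun n => by
    by_cases hn : 0 < n
    · obtain ⟨m, hm, h⟩ := hadj n hn
      exact ⟨m, fun _ => ⟨hm, h.symm⟩⟩
    · exact ⟨0, fun h => absurd h hn⟩
  choose P hP using hparent
  exact ⟨⟨F, P, hinj, fun n hn => (hP n hn).1, fun n hn => (hP n hn).2⟩, hFU⟩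

namespace NatTree

variable (T : G.NatTree)

noncomputable def walkUp (t : ℕ) :
    ∀ n, IsDescendant T.parent n t → G.Walk (T.vert n) (T.vert t)
  | n, h =>
    if hnt : n = t then (Walk.nil : G.Walk (T.vert n) _).copy rfl (congrArg T.vert hnt)
    else
      have hn := (IsDescendant.iff_eq_or_parent.1 h).resolve_left hnt
      Walk.cons (T.adj_parent n hn.1) (walkUp t (T.parent n) hn.2)
termination_by n => n
decreasing_by exact T.parent_lt n hn.1

lemma exists_of_mem_support_walkUp {t n : ℕ} (h : IsDescendant T.parent n t) {x : V}
    (hx : x ∈ (T.walkUp t n h).support) :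
    ∃ m, x = T.vert m ∧ IsDescendant T.parent n m ∧ IsDescendant T.parent m t := by
  induction n, h using walkUp.induct T with
  | case1 h =>
    rw [walkUp, dif_pos rfl, Walk.copy_rfl_rfl, Walk.support_nil, List.mem_singleton] at hx
    exact ⟨t, hx, .refl t, .refl t⟩
  | case2 n h hnt hn _ ih =>
    rw [walkUp, dif_neg hnt, Walk.support_cons, List.mem_cons] at hx
    rcases hx with rfl | hx
    · exact ⟨n, rfl, .refl n, h⟩
    · obtain ⟨m, rfl, hm, hmt⟩ := ih hx
      exact ⟨m, rfl, (IsDescendant.of_parent hn.1).trans hm, hmt⟩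

lemma isPath_walkUp {t n : ℕ} (h : IsDescendant T.parent n t) : (T.walkUp t n h).IsPath := by
  induction n, h using walkUp.induct T with
  | case1 h =>
    rw [walkUp, dif_pos rfl, Walk.copy_rfl_rfl]
    exact Walk.IsPath.nil
  | case2 n h hnt hn _ ih =>
    rw [walkUp, dif_neg hnt, Walk.cons_isPath_iff]
    refine ⟨ih, fun hx => ?_⟩
    obtain ⟨m, hm, hnm, -⟩ := T.exists_of_mem_support_walkUp hn.2 hx
    have := hnm.le T.parent_lt
    have := T.parent_lt n hn.1
    have := T.vert_injective hm
    omega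

def branchRay {b : ℕ → ℕ} (hb : ∀ k, 0 < b (k + 1) ∧ T.parent (b (k + 1)) = b k) :
    GraphRay G where
  f k := T.vert (b k)
  inj := T.vert_injective.comp (strictMono_of_parent_eq T.parent_lt hb).injective
  adj k := (hb k).2 ▸ (T.adj_parent _ (hb k).1).symm

lemma exists_of_mem_support_reverse_walkUp {t n : ℕ} (h : IsDescendant T.parent n t) {x : V}
    (hx : x ∈ (T.walkUp t n h).reverse.support) :
    ∃ m, x = T.vert m ∧ IsDescendant T.parent n m ∧ IsDescendant T.parent m t :=
  T.exists_of_mem_support_walkUp h (by rwa [Walk.support_reverse, List.mem_reverse] at hx)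

theorem hasComb_of_forall_exists_child {U : Set V}
    (hstep : ∀ t, (T.vert ⁻¹' U ∩ subtree T.parent t).Infinite →
      ∃ c, 0 < c ∧ T.parent c = t ∧ (T.vert ⁻¹' U ∩ subtree T.parent c).Infinite)
    (hU : (T.vert ⁻¹' U).Infinite) : G.HasComb U := by
  obtain ⟨b, hb, hrich⟩ :=
    exists_branch hstep (t := 0) (by rwa [subtree_zero T.parent_lt, Set.inter_univ])
  have hbmono := strictMono_of_parent_eq T.parent_lt hb
  obtain ⟨w, a, hw, hlast, hsep⟩ :=
    exists_separated_teeth T.parent_lt hbmono fun k => (hrich k).nonempty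
  have hbw : ∀ n, b (a n) ≤ w n := fun n => (hw n).2.le T.parent_lt
  refine ⟨T.branchRay hb, a, fun n => T.vert (w n), fun n => (T.walkUp _ _ (hw n).2).reverse,
    fun n n' h => ?_, fun n => (hw n).1, fun n => (T.isPath_walkUp _).reverse, ?_, ?_⟩
  · have := T.vert_injective h
    rcases lt_trichotomy n n' with hnn' | rfl | hnn'
    · have := hsep n n' hnn'; have := hbw n'; omega
    · rfl
    · have := hsep n' n hnn'; have := hbw n; omega
  · intro n n' hnn' x hx hx'
    obtain ⟨m, rfl, hwm, hmb⟩ := T.exists_of_mem_support_reverse_walkUp _ hx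
    obtain ⟨m', hmm', hwm', hm'b⟩ := T.exists_of_mem_support_reverse_walkUp _ hx'
    obtain rfl := T.vert_injective hmm'
    have := hwm.le T.parent_lt; have := hmb.le T.parent_lt
    have := hwm'.le T.parent_lt; have := hm'b.le T.parent_lt
    rcases Nat.lt_or_gt_of_ne hnn' with h | h
    · have := hsep n n' h; omega
    · have := hsep n' n h; omega
  · intro n k hk
    obtain ⟨m, hm, hwm, hmb⟩ := T.exists_of_mem_support_reverse_walkUp _ hk
    obtain rfl := T.vert_injective hm
    have hka : k ≤ a n := hlast n k hwm
    have hak : a n ≤ k := hbmono.le_iff_le.1 (hmb.le T.parent_lt)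
    rw [le_antisymm hka hak]

theorem hasSubdividedStar_of_finite_children {U : Set V} {t : ℕ}
    (ht : (T.vert ⁻¹' U ∩ subtree T.parent t).Infinite)
    (hfin : ∀ c, 0 < c → T.parent c = t → (T.vert ⁻¹' U ∩ subtree T.parent c).Finite) :
    G.HasSubdividedStar U := by
  obtain ⟨c, v, hc, hcv⟩ := exists_children_with_descendants ht hfin
  have hvt : ∀ k, IsDescendant T.parent (v k) t :=
    fun k => (hcv k).2.2.2.trans ((hcv k).2.1 ▸ .of_parent (hcv k).1)
  have hvne : ∀ k, v k ≠ t := fun k h => by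
    have := (hcv k).2.2.2.le T.parent_lt
    have := T.parent_lt _ (hcv k).1
    have := (hcv k).2.1
    omega
  -- below `t`, the path to `v k` stays in the subtree of the child `c k`
  have hsame : ∀ k l m, IsDescendant T.parent (v k) m → IsDescendant T.parent (v l) m →
      IsDescendant T.parent m t → m ≠ t → k = l := by
    intro k l m hkm hlm hmt hm
    obtain ⟨d, hd, hdt, hmd⟩ := hmt.exists_child hm
    have hdk : d = c k := IsDescendant.eq_of_parent_eq T.parent_lt hd (hcv k).1
      (hdt.trans (hcv k).2.1.symm) (hkm.trans hmd) (hcv k).2.2.2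
    have hdl : d = c l := IsDescendant.eq_of_parent_eq T.parent_lt hd (hcv l).1
      (hdt.trans (hcv l).2.1.symm) (hlm.trans hmd) (hcv l).2.2.2
    exact hc (hdk.symm.trans hdl)
  refine ⟨T.vert t, fun k => T.vert (v k), fun k => (T.walkUp t (v k) (hvt k)).reverse,
    fun k l h => ?_, fun k => (hcv k).2.2.1, fun k => (T.isPath_walkUp _).reverse,
    fun k h => hvne k (T.vert_injective h), ?_⟩
  · have hkl := T.vert_injective h
    exact hsame k l (v k) (.refl _) (hkl ▸ .refl _) (hvt k) (hvne k)
  · intro k l hkl x hx hx'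
    obtain ⟨m, rfl, hkm, hmt⟩ := T.exists_of_mem_support_reverse_walkUp _ hx
    obtain ⟨m', hmm', hlm, -⟩ := T.exists_of_mem_support_reverse_walkUp _ hx'
    obtain rfl := T.vert_injective hmm'
    by_contra hm
    exact hkl (hsame k l m hkm hlm hmt fun h => hm (congrArg T.vert h))

end NatTree

end SimpleGraph

/-- Star–Comb Lemma: a connected graph with an infinite vertex set `U`
contains a comb with all teeth in `U`, or a subdivided infinite star with all
leaves in `U`. -/
theorem star_comb_lemma {V : Type u} (G : SimpleGraph V) (hconn : G.Connected)
    (U : Set V) (hU : U.Infinite) :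
    (∃ (r : GraphRay G) (a : ℕ → ℕ) (u : ℕ → V)
        (P : (n : ℕ) → G.Walk (r.f (a n)) (u n)),
      Function.Injective u ∧ (∀ n, u n ∈ U) ∧ (∀ n, (P n).IsPath) ∧
      (∀ n m, n ≠ m → ∀ x ∈ (P n).support, x ∉ (P m).support) ∧
      (∀ n k, r.f k ∈ (P n).support → r.f k = r.f (a n))) ∨
    (∃ (c : V) (u : ℕ → V) (P : (n : ℕ) → G.Walk c (u n)),
      Function.Injective u ∧ (∀ n, u n ∈ U) ∧ (∀ n, (P n).IsPath) ∧
      (∀ n, u n ≠ c) ∧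
      (∀ n m, n ≠ m → ∀ x ∈ (P n).support, x ∈ (P m).support → x = c)) := by
  obtain ⟨T, hTU⟩ := hconn.exists_natTree hU
  by_cases hstep : ∀ t, (T.vert ⁻¹' U ∩ subtree T.parent t).Infinite →
      ∃ c, 0 < c ∧ T.parent c = t ∧ (T.vert ⁻¹' U ∩ subtree T.parent c).Infinite
  · exact Or.inl (T.hasComb_of_forall_exists_child hstep hTU)
  · push Not at hstep
    obtain ⟨t, ht, hfin⟩ := hstep
    exact Or.inr (T.hasSubdividedStar_of_finite_children ht hfin)
end
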